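/- arXiv:2104.10877 — 2 statements merged into one kernel-verified Lean document; each statement's English description precedes it below -/
import Mathlib

section
/- Let σ > 0 and τ ∈ (0,1]. If y ≥ 2σ², then (1/(√(2π)·σ·√τ))·exp{−(y/2 − σ²τ/2)²/(2σ²τ)} ≤ 8√τ/(√(2π)·σ³·e). -/
/-! Since τ ≤ 1 and y ≥ 2σ², the point y/2 − σ²τ/2 lies at distance at least σ²/2 from 0, and
`u e^{-u} ≤ e^{-1}` turns the Gaussian factor `exp (-a²/c)` into the polynomial bound `c / (e a²)`. -/

open Real

theorem exp_neg_le_exp_neg_one_div {u : ℝ} (hu : 0 < u) : exp (-u) ≤ exp (-1) / u := by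
  rw [le_div_iff₀ hu, mul_comm]
  exact mul_exp_neg_le_exp_neg_one u

theorem exp_neg_sq_div_le {a b c : ℝ} (hb : 0 < b) (hba : b ≤ |a|) (hc : 0 < c) :
    exp (-a ^ 2 / c) ≤ c / (exp 1 * b ^ 2) := by
  have hsq : b ^ 2 ≤ a ^ 2 := sq_le_sq.mpr (by rwa [abs_of_pos hb])
  calc exp (-a ^ 2 / c) = exp (-(a ^ 2 / c)) := by rw [neg_div]
    _ ≤ exp (-1) / (a ^ 2 / c) :=
        exp_neg_le_exp_neg_one_div (div_pos ((pow_pos hb 2).trans_le hsq) hc)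
    _ ≤ exp (-1) / (b ^ 2 / c) := by gcongr
    _ = c / (exp 1 * b ^ 2) := by rw [exp_neg]; field_simp

theorem gaussian_density_bound_itm (σ τ y : ℝ) (hσ : 0 < σ) (hτ : τ ∈ Set.Ioc (0 : ℝ) 1)
    (hy : 2 * σ ^ 2 ≤ y) :
    (1 / (Real.sqrt (2 * Real.pi) * σ * Real.sqrt τ)) *
        Real.exp (-(y / 2 - σ ^ 2 * τ / 2) ^ 2 / (2 * σ ^ 2 * τ)) ≤
      8 * Real.sqrt τ / (Real.sqrt (2 * Real.pi) * σ ^ 3 * Real.exp 1) := by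
  obtain ⟨hτ0, hτ1⟩ := hτ
  have hdist : σ ^ 2 / 2 ≤ |y / 2 - σ ^ 2 * τ / 2| :=
    le_trans (by nlinarith [sq_nonneg σ]) (le_abs_self _)
  have htail := exp_neg_sq_div_le (by positivity) hdist (by positivity : 0 < 2 * σ ^ 2 * τ)
  calc _ ≤ 1 / (sqrt (2 * π) * σ * sqrt τ) * (2 * σ ^ 2 * τ / (exp 1 * (σ ^ 2 / 2) ^ 2)) := by
        gcongr
    _ = 8 * sqrt τ / (sqrt (2 * π) * σ ^ 3 * exp 1) := by
        field_simp
        rw [sq_sqrt hτ0.le]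
        ring
end

section
/- Let Φ be the standard normal CDF and φ its density, and let σ > 0, τ > 0, ρ < 0. For d ∈ ℝ and z > 0 set d_{ρz} := d + ρz/(σ√τ). Then for any a ∈ ℝ, |∫_0^{a} [(Φ(d⁺) − Φ(d⁺_{ρz})) − (Φ(d⁻) − Φ(d⁻_{ρz}))] ν(dz)| ≤ (|ρ|/√(2πe))·∫_0^∞ z ν(dz), whenever d⁺ − d⁻ = σ√τ and ν is a measure on (0,∞) with ∫_0^∞ z ν(dz) < ∞. -/
/-!
Writing `c = ρz/(σ√τ)`, the integrand is `∫_{d⁻}^{d⁺} (φ u - φ (u + c)) du`. Since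
`|φ'(u)| = |u| e^{-u²/2}/√(2π) ≤ 1/√(2πe)`, the integrand is at most
`|c|·σ√τ/√(2πe) = |ρ|z/√(2πe)` in absolute value; integrate this against `ν`.
-/

open MeasureTheory Real Set

lemma abs_mul_exp_neg_sq_div_two_le (u : ℝ) : |u| * exp (-u ^ 2 / 2) ≤ exp (-1 / 2) := by
  have hu : |u| ≤ exp ((u ^ 2 - 1) / 2) := by
    nlinarith [add_one_le_exp ((u ^ 2 - 1) / 2), sq_nonneg (|u| - 1), sq_abs u]
  calc |u| * exp (-u ^ 2 / 2) ≤ exp ((u ^ 2 - 1) / 2) * exp (-u ^ 2 / 2) := by gcongr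
    _ = exp (-1 / 2) := by rw [← exp_add]; ring_nf

lemma exp_neg_one_div_two_div_sqrt_two_pi :
    exp (-1 / 2) / √(2 * π) = 1 / √(2 * π * exp 1) := by
  have he : exp (-1 / 2) = (√(exp 1))⁻¹ := by
    rw [← exp_half, ← exp_neg]; norm_num
  rw [he, sqrt_mul (by positivity : (0 : ℝ) ≤ 2 * π), one_div, mul_inv, div_eq_mul_inv,
    mul_comm]

lemma abs_gaussian_sub_le (x y : ℝ) :
    |1 / √(2 * π) * exp (-x ^ 2 / 2) - 1 / √(2 * π) * exp (-y ^ 2 / 2)|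
      ≤ 1 / √(2 * π * exp 1) * |x - y| := by
  have hderiv (u : ℝ) : HasDerivAt (fun u : ℝ => 1 / √(2 * π) * exp (-u ^ 2 / 2))
      (1 / √(2 * π) * (exp (-u ^ 2 / 2) * -u)) u := by
    have hsq : HasDerivAt (fun u : ℝ => -u ^ 2 / 2) (-u) u :=
      ((hasDerivAt_pow 2 u).neg.div_const 2).congr_deriv (by ring)
    exact hsq.exp.const_mul _
  have hbound (u : ℝ) :
      ‖1 / √(2 * π) * (exp (-u ^ 2 / 2) * -u)‖ ≤ 1 / √(2 * π * exp 1) := by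
    rw [← exp_neg_one_div_two_div_sqrt_two_pi, norm_mul, norm_mul, norm_neg, norm_of_nonneg
      (by positivity : (0 : ℝ) ≤ 1 / √(2 * π)), norm_of_nonneg (exp_nonneg _), norm_eq_abs,
      mul_comm (exp _), one_div_mul_eq_div]
    gcongr
    exact abs_mul_exp_neg_sq_div_two_le u
  simpa only [norm_eq_abs] using convex_univ.norm_image_sub_le_of_norm_hasDerivWithin_le
    (fun u _ => (hderiv u).hasDerivWithinAt) (fun u _ => hbound u) (mem_univ y) (mem_univ x)

lemma integrable_gaussian : Integrable fun u : ℝ => 1 / √(2 * π) * exp (-u ^ 2 / 2) := by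
  refine ((integrable_exp_neg_mul_sq one_half_pos).const_mul (1 / √(2 * π))).congr ?_
  filter_upwards with u
  congr 2
  ring

lemma abs_primitive_increment_sub_le {f : ℝ → ℝ} {L : ℝ} (hf : Integrable f)
    (hL : ∀ x y, |f x - f y| ≤ L * |x - y|) (a b c : ℝ) :
    |((∫ u in Iic b, f u) - ∫ u in Iic (b + c), f u)
        - ((∫ u in Iic a, f u) - ∫ u in Iic (a + c), f u)| ≤ L * |c| * |b - a| := by
  have hsub (x y : ℝ) : (∫ u in Iic x, f u) - ∫ u in Iic y, f u = ∫ u in y..x, f u :=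
    intervalIntegral.integral_Iic_sub_Iic hf.integrableOn hf.integrableOn
  have hshift : ∫ u in a..b, f (u + c) = ∫ u in (a + c)..(b + c), f u :=
    intervalIntegral.integral_comp_add_right f c
  have hrw : ((∫ u in Iic b, f u) - ∫ u in Iic (b + c), f u)
      - ((∫ u in Iic a, f u) - ∫ u in Iic (a + c), f u) = ∫ u in a..b, (f u - f (u + c)) := by
    have hfc : IntervalIntegrable (fun u => f (u + c)) volume a b := by
      simpa using (hf.intervalIntegrable (a := a + c) (b := b + c)).comp_add_right c
    rw [intervalIntegral.integral_sub hf.intervalIntegrable hfc, hshift, ← hsub, ← hsub]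
    ring
  have hbound : ∀ u ∈ uIoc a b, ‖f u - f (u + c)‖ ≤ L * |c| := fun u _ => by
    simpa [norm_eq_abs] using hL u (u + c)
  simpa [hrw, norm_eq_abs] using intervalIntegral.norm_integral_le_of_norm_le_const hbound

lemma abs_setIntegral_Ioc_le_mul_integral_Ioi {ν : Measure ℝ} {g : ℝ → ℝ} {K : ℝ}
    (hν : IntegrableOn (fun z : ℝ => z) (Ioi 0) ν)
    (hg : ∀ z, 0 < z → |g z| ≤ K * z) (a : ℝ) :
    |∫ z in Ioc 0 a, g z ∂ν| ≤ K * ∫ z in Ioi 0, z ∂ν := by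
  have hK : 0 ≤ K := by simpa using (abs_nonneg _).trans (hg 1 one_pos)
  have hIoc : Ioc (0 : ℝ) a ⊆ Ioi 0 := Ioc_subset_Ioi_self
  calc |∫ z in Ioc 0 a, g z ∂ν| ≤ ∫ z in Ioc 0 a, K * z ∂ν := by
        refine norm_integral_le_of_norm_le (f := g) ((hν.mono_set hIoc).const_mul K) ?_
        filter_upwards [ae_restrict_mem measurableSet_Ioc] with z hz
        exact hg z hz.1
    _ = K * ∫ z in Ioc 0 a, z ∂ν := integral_const_mul K _
    _ ≤ K * ∫ z in Ioi 0, z ∂ν := by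
        refine mul_le_mul_of_nonneg_left (setIntegral_mono_set hν ?_ hIoc.eventuallyLE) hK
        filter_upwards [ae_restrict_mem measurableSet_Ioi] with z hz
        exact le_of_lt hz

theorem cdf_increment_integral_bound_general (σ τ ρ : ℝ)
    (φ Φ : ℝ → ℝ)
    (hφ : ∀ u : ℝ, φ u = (1 / Real.sqrt (2 * Real.pi)) * Real.exp (-u ^ 2 / 2))
    (hΦ : ∀ y : ℝ, Φ y = ∫ u in Set.Iic y, φ u)
    (dp dm : ℝ) (hd : dp = dm + σ * Real.sqrt τ)
    (ν : Measure ℝ) (hνfin : Integrable (fun z : ℝ => z) (ν.restrict (Set.Ioi 0))) :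
    ∀ a : ℝ,
      |∫ z in Set.Ioc (0 : ℝ) a,
          ((Φ dp - Φ (dp + ρ * z / (σ * Real.sqrt τ)))
            - (Φ dm - Φ (dm + ρ * z / (σ * Real.sqrt τ)))) ∂ν| ≤
        (|ρ| / Real.sqrt (2 * Real.pi * Real.exp 1)) * ∫ z in Set.Ioi (0 : ℝ), z ∂ν := by
  obtain rfl : φ = fun u => 1 / √(2 * π) * exp (-u ^ 2 / 2) := funext hφ
  obtain rfl : Φ = fun y => ∫ u in Iic y, 1 / √(2 * π) * exp (-u ^ 2 / 2) := funext hΦ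
  refine abs_setIntegral_Ioc_le_mul_integral_Ioi hνfin fun z hz => ?_
  set s := σ * √τ
  calc _ ≤ 1 / √(2 * π * exp 1) * |ρ * z / s| * |dp - dm| :=
        abs_primitive_increment_sub_le integrable_gaussian abs_gaussian_sub_le dm dp _
    _ = 1 / √(2 * π * exp 1) * (|ρ * z / s| * |s|) := by rw [hd, add_sub_cancel_left]; ring
    _ ≤ 1 / √(2 * π * exp 1) * |ρ * z| := by
        gcongr
        rcases eq_or_ne s 0 with hs | hs
        · simp only [hs, abs_zero, mul_zero]
          positivity
        · rw [abs_div, div_mul_cancel₀ _ (abs_ne_zero.2 hs)]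
    _ = |ρ| / √(2 * π * exp 1) * z := by rw [abs_mul, abs_of_pos hz]; ring

/-- Bound on the integrated difference of normal CDF increments appearing in the
evaluation of the residual terms: if `d⁺ = d⁻ + σ√τ` and `ν` is a measure on
`(0,∞)` with a finite first moment, then
`|∫_0^a [(Φ(d⁺) − Φ(d⁺_{ρz})) − (Φ(d⁻) − Φ(d⁻_{ρz}))] ν(dz)|
  ≤ (|ρ|/√(2πe)) ∫_0^∞ z ν(dz)`,
where `d_{ρz} = d + ρz/(σ√τ)`. -/
theorem cdf_increment_integral_bound (σ τ ρ : ℝ) (hσ : 0 < σ) (hτ : 0 < τ) (hρ : ρ < 0)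
    (φ Φ : ℝ → ℝ)
    (hφ : ∀ u : ℝ, φ u = (1 / Real.sqrt (2 * Real.pi)) * Real.exp (-u ^ 2 / 2))
    (hΦ : ∀ y : ℝ, Φ y = ∫ u in Set.Iic y, φ u)
    (dp dm : ℝ) (hd : dp = dm + σ * Real.sqrt τ)
    (ν : Measure ℝ) (hνfin : Integrable (fun z : ℝ => z) (ν.restrict (Set.Ioi 0))) :
    ∀ a : ℝ,
      |∫ z in Set.Ioc (0 : ℝ) a,
          ((Φ dp - Φ (dp + ρ * z / (σ * Real.sqrt τ)))
            - (Φ dm - Φ (dm + ρ * z / (σ * Real.sqrt τ)))) ∂ν| ≤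
        (|ρ| / Real.sqrt (2 * Real.pi * Real.exp 1)) * ∫ z in Set.Ioi (0 : ℝ), z ∂ν :=
  cdf_increment_integral_bound_general σ τ ρ φ Φ hφ hΦ dp dm hd ν hνfin
end
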